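/- arXiv:2103.08021 — 2 statements merged into one kernel-verified Lean document; each statement's English description precedes it below -/
import Mathlib

section
/- Let M be a matroid on a finite ground set E (possibly empty). Then g_M(x,y,z,w) = ∑_{A ⊆ E} g_{M|A}(0,y,z,w) · g_{M/A}(x,0,z,w), where the sum ranges over all subsets A of E, including A = ∅ and A = E. -/
open Matroid MvPolynomial

variable {α : Type*}

-- The rank of a finset `A` in a matroid `M`: the maximal size of an independent subset of `A`.
open scoped Classical in
noncomputable def matRank [Fintype α] (M : Matroid α) (A : Finset α) : ℕ :=
  (A.powerset.filter (fun I : Finset α => M.Indep (I : Set α))).sup Finset.card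

/-- The (finite) ground set of a matroid on a finite type, as a finset. -/
noncomputable def groundFinset [Fintype α] (M : Matroid α) : Finset α :=
  M.E.toFinite.toFinset

/-- `g_M(x,y,z,w) = ∑_{A ⊆ E} (x−z)^{r−rk A} (y+z)^{rk A} (y−w)^{|A|−rk A}
(x+w)^{(|E|−|A|)−(r−rk A)}`, with `x = X 0`, `y = X 1`, `z = X 2`, `w = X 3`;
equivalently `g_M = (y+z)^r (x+w)^{|E|−r} T_M((x+y)/(y+z), (x+y)/(x+w))`. -/
noncomputable def gPoly [Fintype α] (M : Matroid α) : MvPolynomial (Fin 4) ℤ :=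
  ∑ A ∈ (groundFinset M).powerset,
    (X 0 - X 2) ^ (matRank M (groundFinset M) - matRank M A) *
      (X 1 + X 2) ^ (matRank M A) *
      (X 1 - X 3) ^ (A.card - matRank M A) *
      (X 0 + X 3) ^ (((groundFinset M).card - A.card)
        - (matRank M (groundFinset M) - matRank M A))

/-- Deletion of a set `D` from the matroid `M`: the restriction of `M` to `M.E \ D`. -/
def mdelete (M : Matroid α) (D : Set α) : Matroid α := M ↾ (M.E \ D)

/-- Contraction of a set `C` in the matroid `M`, defined via duality:
`M / C = (M✶ \ C)✶`, a matroid on `M.E \ C`. -/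
def mcontract (M : Matroid α) (C : Set α) : Matroid α := (M✶ ↾ (M.E \ C))✶

/-- Substituting `x := 0` (the variable `X 0`) into a polynomial in `x, y, z, w`. -/
noncomputable def subX0 : MvPolynomial (Fin 4) ℤ →ₐ[ℤ] MvPolynomial (Fin 4) ℤ :=
  aeval fun j => if j = 0 then 0 else X j

/-- Substituting `y := 0` (the variable `X 1`) into a polynomial in `x, y, z, w`. -/
noncomputable def subY0 : MvPolynomial (Fin 4) ℤ →ₐ[ℤ] MvPolynomial (Fin 4) ℤ :=
  aeval fun j => if j = 1 then 0 else X j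

section ConvolutionHelpers

open scoped Classical

variable {α : Type*} [Fintype α] {M : Matroid α}

-- ### Basic facts about `matRank`

lemma le_matRank {I A : Finset α} (hIA : I ⊆ A) (hI : M.Indep ↑I) : I.card ≤ matRank M A :=
  Finset.le_sup (by simp [Finset.mem_filter, Finset.mem_powerset, hIA, hI])

lemma matRank_le {A : Finset α} {n : ℕ} (h : ∀ I ⊆ A, M.Indep ↑I → I.card ≤ n) :
    matRank M A ≤ n :=
  Finset.sup_le fun I hI => by
    simp only [Finset.mem_filter, Finset.mem_powerset] at hI; exact h I hI.1 hI.2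

lemma exists_eq_matRank (M : Matroid α) (A : Finset α) :
    ∃ I, I ⊆ A ∧ M.Indep ↑I ∧ matRank M A = I.card := by
  obtain ⟨I, hI, h⟩ := Finset.exists_mem_eq_sup
    (A.powerset.filter (fun I : Finset α => M.Indep (I : Set α)))
    ⟨∅, by simp [M.empty_indep]⟩ Finset.card
  simp only [Finset.mem_filter, Finset.mem_powerset] at hI
  exact ⟨I, hI.1, hI.2, h⟩

lemma matRank_mono {A B : Finset α} (h : A ⊆ B) : matRank M A ≤ matRank M B :=
  matRank_le fun I hIA hI => le_matRank (hIA.trans h) hI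

lemma matRank_eq_ncard_of_basis' {A : Finset α} {J : Set α} (hJ : M.IsBasis' J ↑A) :
    matRank M A = J.ncard := by
  have hfin : J.Finite := Set.toFinite J
  have hJF : (hfin.toFinset : Set α) = J := hfin.coe_toFinset
  apply le_antisymm
  · apply matRank_le
    intro I hIA hI
    obtain ⟨K, hK, hIK⟩ := hI.subset_isBasis'_of_subset (Finset.coe_subset.2 hIA)
    have hKJ : K.encard = J.encard := hK.encard_eq_encard hJ
    have hIcard : (I : Set α).encard = I.card := Set.encard_coe_eq_coe_finsetCard I
    have h1 : (I : Set α).encard ≤ K.encard := Set.encard_le_encard hIK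
    rw [hKJ, hfin.encard_eq_coe_toFinset_card] at h1
    rw [hIcard] at h1
    have h2 := Nat.cast_le.mp (h1 : (I.card : ℕ∞) ≤ _)
    rwa [Set.ncard_eq_toFinset_card J hfin]
  · have hsub : hfin.toFinset ⊆ A := by
      rw [← Finset.coe_subset, hJF]; exact hJ.subset
    have := le_matRank hsub (by rw [hJF]; exact hJ.indep)
    rwa [Set.ncard_eq_toFinset_card J hfin]
    
lemma matRank_le_add {A B : Finset α} (h : A ⊆ B) :
    matRank M B ≤ matRank M A + (B \ A).card := by
  apply matRank_le
  intro I hIB hI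
  have h1 : (I ∩ A).card ≤ matRank M A :=
    le_matRank Finset.inter_subset_right (hI.subset (by simp))
  have h2 : (I \ A).card ≤ (B \ A).card :=
    Finset.card_le_card (Finset.sdiff_subset_sdiff hIB (le_refl _))
  have h3 : (I ∩ A).card + (I \ A).card = I.card := Finset.card_inter_add_card_sdiff I A
  omega

lemma matRank_restrict {A : Finset α} {R : Set α} (hAR : ↑A ⊆ R) :
    matRank (M ↾ R) A = matRank M A := by
  unfold matRank
  congr 1
  apply Finset.filter_congr
  intro I hI
  simp only [Finset.mem_powerset] at hI
  simp [Matroid.restrict_indep_iff, (Finset.coe_subset.2 hI).trans hAR]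

lemma coe_groundFinset (M : Matroid α) : (↑(groundFinset M) : Set α) = M.E :=
  Set.Finite.coe_toFinset _

lemma groundFinset_eq {A : Finset α} (h : M.E = ↑A) : groundFinset M = A := by
  apply Finset.coe_injective; rw [coe_groundFinset, h]

lemma matRank_base_ground {B : Set α} (hB : M.IsBase B) : matRank M (groundFinset M) = B.ncard :=
  matRank_eq_ncard_of_basis' (by rw [coe_groundFinset]; exact hB.isBasis_ground.isBasis')

lemma matRank_dual (X : Finset α) (hX : X ⊆ groundFinset M) :
    matRank M✶ X + matRank M (groundFinset M)
      = X.card + matRank M (groundFinset M \ X) := by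
  set E := groundFinset M with hEdef
  have hE : (↑E : Set α) = M.E := coe_groundFinset M
  have hXE : (↑X : Set α) ⊆ M.E := by rw [← hE]; exact Finset.coe_subset.2 hX
  have hcoe : (↑(E \ X) : Set α) = M.E \ ↑X := by rw [Finset.coe_sdiff, hE]
  obtain ⟨J, hJ⟩ := M.exists_isBasis' (↑(E \ X))
  obtain ⟨B, hB, hJB⟩ := hJ.indep.exists_isBase_superset
  have hBE : B ⊆ M.E := hB.subset_ground
  have hBfin : B.Finite := Set.toFinite B
  set Bf := hBfin.toFinset with hBfdef
  have hBf : (↑Bf : Set α) = B := hBfin.coe_toFinset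
  have hBsub : Bf ⊆ E := by rw [← Finset.coe_subset, hBf, hE]; exact hBE
  have hrE : matRank M E = Bf.card := by
    rw [matRank_base_ground hB, Set.ncard_eq_toFinset_card B hBfin]
  -- B ∩ (E \ X) = J
  have hBJ : B ∩ (↑(E \ X) : Set α) = J := hJ.inter_eq_of_subset_indep hJB hB.indep
  have hc3 : (↑(Bf \ X) : Set α) = J := by
    rw [Finset.coe_sdiff, hBf]
    rw [hcoe] at hBJ
    rw [← hBJ]
    ext a; simp only [Set.mem_inter_iff, Set.mem_diff]
    exact ⟨fun ⟨h1, h2⟩ => ⟨h1, hBE h1, h2⟩, fun ⟨h1, _, h3⟩ => ⟨h1, h3⟩⟩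
  have hrEX : matRank M (E \ X) = (Bf \ X).card := by
    rw [matRank_eq_ncard_of_basis' hJ, ← hc3, Set.ncard_coe_finset]
  -- lower bound
  have hdind : M✶.Indep ↑(X \ Bf) := by
    rw [dual_indep_iff_exists']
    refine ⟨(Finset.coe_subset.2 (Finset.sdiff_subset)).trans hXE, B, hB, ?_⟩
    rw [Finset.coe_sdiff, hBf]
    exact Set.disjoint_sdiff_left
  have lb : (X \ Bf).card ≤ matRank M✶ X := le_matRank Finset.sdiff_subset hdind
  have c1 : (X ∩ Bf).card + (X \ Bf).card = X.card := Finset.card_inter_add_card_sdiff X Bf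
  have c2 : (Bf ∩ X).card + (Bf \ X).card = Bf.card := Finset.card_inter_add_card_sdiff Bf X
  have c4 : (X ∩ Bf).card = (Bf ∩ X).card := by rw [Finset.inter_comm]
  -- upper bound
  obtain ⟨I0, hI0X, hI0ind, hI0eq⟩ := exists_eq_matRank M✶ X
  rw [dual_indep_iff_exists'] at hI0ind
  obtain ⟨hI0E, B', hB', hdisj⟩ := hI0ind
  have hB'E : B' ⊆ M.E := hB'.subset_ground
  have hB'fin : B'.Finite := Set.toFinite B'
  set B'f := hB'fin.toFinset with hB'fdef
  have hB'f : (↑B'f : Set α) = B' := hB'fin.coe_toFinset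
  have hB'sub : B'f ⊆ E := by rw [← Finset.coe_subset, hB'f, hE]; exact hB'E
  have hrE' : matRank M E = B'f.card := by
    rw [matRank_base_ground hB', Set.ncard_eq_toFinset_card B' hB'fin]
  have u1 : (B'f \ X).card ≤ matRank M (E \ X) :=
    le_matRank (Finset.sdiff_subset_sdiff hB'sub (le_refl _))
      (hB'.indep.subset (by rw [Finset.coe_sdiff, hB'f]; exact Set.diff_subset))
  have u2 : I0.card + (B'f ∩ X).card ≤ X.card := by
    have hdisj2 : Disjoint I0 (B'f ∩ X) := by
      rw [Finset.disjoint_left]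
      intro a ha ha2
      have : a ∈ B' := by
        rw [← hB'f]; exact_mod_cast (Finset.mem_inter.1 ha2).1
      exact (Set.disjoint_left.1 hdisj) (by exact_mod_cast ha) this
    calc I0.card + (B'f ∩ X).card = (I0 ∪ (B'f ∩ X)).card :=
          (Finset.card_union_of_disjoint hdisj2).symm
      _ ≤ X.card := Finset.card_le_card (Finset.union_subset hI0X Finset.inter_subset_right)
  have u3 : (B'f ∩ X).card + (B'f \ X).card = B'f.card := Finset.card_inter_add_card_sdiff B'f X
  omega

lemma groundFinset_restrict (A : Finset α) : groundFinset (M ↾ (↑A : Set α)) = A :=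
  groundFinset_eq (by simp)

lemma groundFinset_mcontract {A : Finset α} (hA : A ⊆ groundFinset M) :
    groundFinset (mcontract M (↑A : Set α)) = groundFinset M \ A := by
  apply groundFinset_eq
  show (M✶ ↾ (M✶.E \ ↑A))✶.E = _
  rw [Matroid.dual_ground, Matroid.restrict_ground_eq, Matroid.dual_ground,
    Finset.coe_sdiff, coe_groundFinset]

lemma matRank_mcontract {A C : Finset α} (hA : A ⊆ groundFinset M)
    (hC : C ⊆ groundFinset M \ A) :
    matRank (mcontract M (↑A : Set α)) C + matRank M A = matRank M (A ∪ C) := by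
  set E := groundFinset M with hEdef
  have hE : (↑E : Set α) = M.E := coe_groundFinset M
  set N := M✶ ↾ (M.E \ (↑A : Set α)) with hNdef
  have hNg : groundFinset N = E \ A := by
    apply groundFinset_eq
    rw [Matroid.restrict_ground_eq, Finset.coe_sdiff, hE]
  have hNr : ∀ Y : Finset α, Y ⊆ E \ A → matRank N Y = matRank M✶ Y := by
    intro Y hY
    apply matRank_restrict
    have := Finset.coe_subset.2 hY
    rwa [Finset.coe_sdiff, hE] at this
  -- dual formula for N at C
  have h1 : matRank N✶ C + matRank N (groundFinset N)
      = C.card + matRank N (groundFinset N \ C) := matRank_dual C (by rw [hNg]; exact hC)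
  rw [hNg] at h1
  rw [hNr (E \ A) (le_refl _), hNr ((E \ A) \ C) Finset.sdiff_subset] at h1
  -- dual ground for M✶'s formulas : groundFinset M✶ = E
  have hgd : groundFinset M✶ = E := groundFinset_eq (by rw [Matroid.dual_ground, hE])
  have h2 := matRank_dual (M := M) (E \ A) Finset.sdiff_subset
  have h3 := matRank_dual (M := M) ((E \ A) \ C) (Finset.sdiff_subset.trans Finset.sdiff_subset)
  have e1 : E \ (E \ A) = A := Finset.sdiff_sdiff_eq_self hA
  have e2 : E \ ((E \ A) \ C) = A ∪ C := by
    ext a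
    simp only [Finset.mem_sdiff, Finset.mem_union, not_and, not_not, Decidable.not_not]
    constructor
    · rintro ⟨haE, h⟩
      by_cases hA' : a ∈ A
      · exact Or.inl hA'
      · exact Or.inr (h ⟨haE, hA'⟩)
    · rintro (h | h)
      · exact ⟨hA h, fun h' => absurd h' (by simp [h])⟩
      · exact ⟨(Finset.mem_sdiff.1 (hC h)).1, fun _ => h⟩
  rw [e1] at h2
  rw [e2] at h3
  have c1 : ((E \ A) \ C).card + C.card = (E \ A).card :=
    Finset.card_sdiff_add_card_eq_card hC
  -- mcontract M ↑A = N✶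
  have hmc : mcontract M (↑A : Set α) = N✶ := rfl
  rw [hmc]
  omega

-- ### Generic algebraic helper lemmas

lemma negOnePowCongr {R : Type*} [Monoid R] [HasDistribNeg R] {m n : ℕ}
    (h : m % 2 = n % 2) : (-1 : R) ^ m = (-1) ^ n := by
  rcases Nat.even_or_odd m with hm | hm
  · have hn : Even n := by rw [Nat.even_iff] at hm ⊢; omega
    rw [hm.neg_one_pow, hn.neg_one_pow]
  · have hn : Odd n := by rw [Nat.odd_iff] at hm ⊢; omega
    rw [hm.neg_one_pow, hn.neg_one_pow]

lemma sumPowersetNegOne {R : Type*} [CommRing R] (s : Finset α) :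
    ∑ t ∈ s.powerset, (-1 : R) ^ t.card = if s = ∅ then 1 else 0 := by
  have h := Finset.sum_powerset_neg_one_pow_card (x := s)
  have h2 := congrArg (fun n : ℤ => (n : R)) h
  push_cast at h2
  simpa [apply_ite (fun n : ℤ => (n : R))] using h2

lemma prodid {R : Type*} [CommRing R] (z w u v q r : R) (a1 a2 b1 b2 k1 k2 : ℕ)
    (hk1 : k1 = a1 + a2) (hk2 : k2 = b1 + b2) :
    ((-z) ^ a1 * u * v * w ^ b1) * (q * z ^ a2 * (-w) ^ b2 * r)
      = (-1 : R) ^ (a2 + b2) * ((-1) ^ k1 * (q * u * v * z ^ k1 * w ^ k2 * r)) := by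
  have hs : (-1 : R) ^ (a2 + b2) * (-1) ^ k1 = (-1) ^ (a1 + b2) := by
    rw [← pow_add]
    exact negOnePowCongr (by omega)
  rw [← mul_assoc ((-1:R)^(a2+b2)), hs, hk1, hk2, neg_pow z, neg_pow w, pow_add, pow_add, pow_add]
  ring

lemma signSum {R : Type*} [CommRing R] {E B S : Finset α} (hS : S ⊆ E) :
    (∑ A ∈ E.powerset, if B ⊆ A ∧ A ⊆ S then (-1 : R) ^ (S \ A).card else 0)
      = if S = B then 1 else 0 := by
  by_cases hBS : B ⊆ S
  · rw [← Finset.sum_filter]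
    have hre : ∑ A ∈ E.powerset.filter (fun A => B ⊆ A ∧ A ⊆ S), (-1 : R) ^ (S \ A).card
        = ∑ D ∈ (S \ B).powerset, (-1 : R) ^ D.card := by
      apply Finset.sum_nbij' (i := fun A => S \ A) (j := fun D => S \ D)
      · intro A hA
        simp only [Finset.mem_filter, Finset.mem_powerset] at hA ⊢
        exact Finset.sdiff_subset_sdiff (le_refl _) hA.2.1
      · intro D hD
        simp only [Finset.mem_filter, Finset.mem_powerset] at hD ⊢
        refine ⟨Finset.sdiff_subset.trans hS, ?_, Finset.sdiff_subset⟩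
        intro a ha
        simp only [Finset.mem_sdiff]
        exact ⟨hBS ha, fun h => (Finset.mem_sdiff.1 (hD h)).2 ha⟩
      · intro A hA
        simp only [Finset.mem_filter, Finset.mem_powerset] at hA
        exact Finset.sdiff_sdiff_eq_self hA.2.2
      · intro D hD
        simp only [Finset.mem_powerset] at hD
        exact Finset.sdiff_sdiff_eq_self (hD.trans Finset.sdiff_subset)
      · intro A _; rfl
    rw [hre, sumPowersetNegOne]
    congr 1
    simp only [eq_iff_iff]
    constructor
    · intro h
      exact Finset.Subset.antisymm (Finset.sdiff_eq_empty_iff_subset.1 h) hBS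
    · intro h; rw [h]; exact Finset.sdiff_self B
  · have h1 : ∀ A ∈ E.powerset, (if B ⊆ A ∧ A ⊆ S then (-1 : R) ^ (S \ A).card else 0) = 0 := by
      intro A _
      rw [if_neg]
      rintro ⟨h1, h2⟩
      exact hBS (h1.trans h2)
    rw [Finset.sum_congr rfl h1, Finset.sum_const_zero, if_neg]
    intro h; exact hBS (h ▸ le_refl _)

lemma conv {R : Type*} [CommRing R] (x y z w : R) (E : Finset α) (rk : Finset α → ℕ)
    (hmono : ∀ ⦃A B : Finset α⦄, A ⊆ B → rk A ≤ rk B)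
    (hstep : ∀ ⦃A B : Finset α⦄, A ⊆ B → rk B ≤ rk A + (B \ A).card) :
    ∑ B ∈ E.powerset, (x - z) ^ (rk E - rk B) * (y + z) ^ rk B * (y - w) ^ (B.card - rk B)
        * (x + w) ^ ((E.card - B.card) - (rk E - rk B))
    = ∑ A ∈ E.powerset,
        (∑ B ∈ A.powerset, (-z) ^ (rk A - rk B) * (y + z) ^ rk B * (y - w) ^ (B.card - rk B)
            * w ^ ((A.card - B.card) - (rk A - rk B)))
      * (∑ C ∈ (E \ A).powerset,
          (x - z) ^ ((rk E - rk A) - (rk (A ∪ C) - rk A)) * z ^ (rk (A ∪ C) - rk A)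
            * (-w) ^ (C.card - (rk (A ∪ C) - rk A))
            * (x + w) ^ (((E \ A).card - C.card) - ((rk E - rk A) - (rk (A ∪ C) - rk A)))) := by
  set F1 : Finset α → Finset α → R := fun B A =>
    (-z) ^ (rk A - rk B) * (y + z) ^ rk B * (y - w) ^ (B.card - rk B)
      * w ^ ((A.card - B.card) - (rk A - rk B)) with hF1
  set F2 : Finset α → Finset α → R := fun A S =>
    (x - z) ^ (rk E - rk S) * z ^ (rk S - rk A) * (-w) ^ ((S \ A).card - (rk S - rk A))
      * (x + w) ^ ((E.card - S.card) - (rk E - rk S)) with hF2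
  set H : Finset α → Finset α → R := fun B S =>
    (-1 : R) ^ (rk S - rk B) * ((x - z) ^ (rk E - rk S) * (y + z) ^ rk B
      * (y - w) ^ (B.card - rk B) * z ^ (rk S - rk B)
      * w ^ ((S.card - B.card) - (rk S - rk B))
      * (x + w) ^ ((E.card - S.card) - (rk E - rk S))) with hH
  -- Step 1: reindex the C-sum as an S-sum
  have step1 : ∀ A ∈ E.powerset,
      (∑ C ∈ (E \ A).powerset,
          (x - z) ^ ((rk E - rk A) - (rk (A ∪ C) - rk A)) * z ^ (rk (A ∪ C) - rk A)
            * (-w) ^ (C.card - (rk (A ∪ C) - rk A))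
            * (x + w) ^ (((E \ A).card - C.card) - ((rk E - rk A) - (rk (A ∪ C) - rk A))))
      = ∑ S ∈ E.powerset.filter (fun S => A ⊆ S), F2 A S := by
    intro A hA
    rw [Finset.mem_powerset] at hA
    apply Finset.sum_nbij' (i := fun C => A ∪ C) (j := fun S => S \ A)
    · intro C hC
      rw [Finset.mem_powerset] at hC
      simp only [Finset.mem_filter, Finset.mem_powerset]
      exact ⟨Finset.union_subset hA (hC.trans Finset.sdiff_subset), Finset.subset_union_left⟩
    · intro S hS
      simp only [Finset.mem_filter, Finset.mem_powerset] at hS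
      rw [Finset.mem_powerset]
      exact Finset.sdiff_subset_sdiff hS.1 (le_refl _)
    · intro C hC
      rw [Finset.mem_powerset] at hC
      rw [Finset.union_sdiff_cancel_left]
      rw [Finset.disjoint_left]
      intro a haA haC
      exact (Finset.mem_sdiff.1 (hC haC)).2 haA
    · intro S hS
      simp only [Finset.mem_filter, Finset.mem_powerset] at hS
      exact Finset.union_sdiff_of_subset hS.2
    · intro C hC
      rw [Finset.mem_powerset] at hC
      have hdisj : Disjoint A C := by
        rw [Finset.disjoint_left]
        intro a haA haC
        exact (Finset.mem_sdiff.1 (hC haC)).2 haA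
      have hACE : A ∪ C ⊆ E := Finset.union_subset hA (hC.trans Finset.sdiff_subset)
      have hsd : (A ∪ C) \ A = C := Finset.union_sdiff_cancel_left hdisj
      have hr1 : rk A ≤ rk (A ∪ C) := hmono Finset.subset_union_left
      have hr2 : rk (A ∪ C) ≤ rk E := hmono hACE
      have hc1 : (A ∪ C).card = A.card + C.card := Finset.card_union_of_disjoint hdisj
      have hc2 : (E \ A).card = E.card - A.card := Finset.card_sdiff_of_subset hA
      have hc3 : A.card ≤ E.card := Finset.card_le_card hA
      have hc4 : (A ∪ C).card ≤ E.card := Finset.card_le_card hACE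
      have hc5 : C.card ≤ (E \ A).card := Finset.card_le_card hC
      have e1 : rk E - rk A - (rk (A ∪ C) - rk A) = rk E - rk (A ∪ C) := by omega
      have e2 : (E \ A).card - C.card - (rk E - rk (A ∪ C))
          = E.card - (A ∪ C).card - (rk E - rk (A ∪ C)) := by omega
      simp only [hF2, hsd, e1, e2]
  -- Step 2: rewrite powersets as filtered sums over E.powerset
  have hps : ∀ {A : Finset α}, A ⊆ E → A.powerset = E.powerset.filter (fun B => B ⊆ A) := by
    intro A hA
    ext B
    simp only [Finset.mem_powerset, Finset.mem_filter]
    exact ⟨fun h => ⟨h.trans hA, h⟩, fun h => h.2⟩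
  symm
  calc
    ∑ A ∈ E.powerset,
        (∑ B ∈ A.powerset, (-z) ^ (rk A - rk B) * (y + z) ^ rk B * (y - w) ^ (B.card - rk B)
            * w ^ ((A.card - B.card) - (rk A - rk B)))
      * (∑ C ∈ (E \ A).powerset,
          (x - z) ^ ((rk E - rk A) - (rk (A ∪ C) - rk A)) * z ^ (rk (A ∪ C) - rk A)
            * (-w) ^ (C.card - (rk (A ∪ C) - rk A))
            * (x + w) ^ (((E \ A).card - C.card) - ((rk E - rk A) - (rk (A ∪ C) - rk A))))
      = ∑ A ∈ E.powerset, (∑ B ∈ E.powerset, if B ⊆ A then F1 B A else 0)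
          * (∑ S ∈ E.powerset, if A ⊆ S then F2 A S else 0) := by
        refine Finset.sum_congr rfl fun A hA => ?_
        have hAsub := Finset.mem_powerset.1 hA
        rw [step1 A hA]
        congr 1
        · rw [hps hAsub, Finset.sum_filter]
        · rw [Finset.sum_filter]
    _ = ∑ A ∈ E.powerset, ∑ B ∈ E.powerset, ∑ S ∈ E.powerset,
          (if B ⊆ A then F1 B A else 0) * (if A ⊆ S then F2 A S else 0) := by
        refine Finset.sum_congr rfl fun A _ => ?_
        rw [Finset.sum_mul_sum]
    _ = ∑ B ∈ E.powerset, ∑ S ∈ E.powerset, ∑ A ∈ E.powerset,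
          (if B ⊆ A then F1 B A else 0) * (if A ⊆ S then F2 A S else 0) := by
        rw [Finset.sum_comm]
        exact Finset.sum_congr rfl fun B _ => Finset.sum_comm
    _ = ∑ B ∈ E.powerset, ∑ S ∈ E.powerset, (if S = B then 1 else 0) * H B S := by
        refine Finset.sum_congr rfl fun B hB => Finset.sum_congr rfl fun S hS => ?_
        have hSsub := Finset.mem_powerset.1 hS
        have key : ∀ A ∈ E.powerset,
            (if B ⊆ A then F1 B A else 0) * (if A ⊆ S then F2 A S else 0)
              = (if B ⊆ A ∧ A ⊆ S then (-1 : R) ^ (S \ A).card else 0) * H B S := by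
          intro A _
          by_cases h1 : B ⊆ A
          · by_cases h2 : A ⊆ S
            · rw [if_pos h1, if_pos h2, if_pos ⟨h1, h2⟩]
              have hm1 : rk B ≤ rk A := hmono h1
              have hm2 : rk A ≤ rk S := hmono h2
              have hs1 : rk A ≤ rk B + (A \ B).card := hstep h1
              have hs2 : rk S ≤ rk A + (S \ A).card := hstep h2
              have hcB : B.card ≤ A.card := Finset.card_le_card h1
              have hcA : A.card ≤ S.card := Finset.card_le_card h2
              have hcd1 : (A \ B).card = A.card - B.card := Finset.card_sdiff_of_subset h1
              have hcd2 : (S \ A).card = S.card - A.card := Finset.card_sdiff_of_subset h2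
              have e1 : rk S - rk B = (rk A - rk B) + (rk S - rk A) := by omega
              have e2 : (S.card - B.card) - (rk S - rk B)
                  = ((A.card - B.card) - (rk A - rk B)) + ((S \ A).card - (rk S - rk A)) := by
                omega
              simp only [hF1, hF2, hH]
              rw [prodid z w ((y + z) ^ rk B) ((y - w) ^ (B.card - rk B))
                ((x - z) ^ (rk E - rk S)) ((x + w) ^ ((E.card - S.card) - (rk E - rk S)))
                (rk A - rk B) (rk S - rk A) ((A.card - B.card) - (rk A - rk B))
                ((S \ A).card - (rk S - rk A)) (rk S - rk B)
                ((S.card - B.card) - (rk S - rk B)) e1 e2]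
              rw [show (rk S - rk A) + ((S \ A).card - (rk S - rk A)) = (S \ A).card from by
                omega]
            · rw [if_neg h2, if_neg (show ¬(B ⊆ A ∧ A ⊆ S) from fun h => h2 h.2)]
              simp
          · rw [if_neg h1, if_neg (show ¬(B ⊆ A ∧ A ⊆ S) from fun h => h1 h.1)]
            simp
        rw [Finset.sum_congr rfl key, ← Finset.sum_mul, signSum hSsub]
    _ = ∑ B ∈ E.powerset, H B B := by
        refine Finset.sum_congr rfl fun B hB => ?_
        simp only [ite_mul, one_mul, zero_mul]
        rw [Finset.sum_ite_eq' E.powerset B (H B), if_pos hB]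
    _ = ∑ B ∈ E.powerset, (x - z) ^ (rk E - rk B) * (y + z) ^ rk B * (y - w) ^ (B.card - rk B)
        * (x + w) ^ ((E.card - B.card) - (rk E - rk B)) := by
        refine Finset.sum_congr rfl fun B _ => ?_
        simp only [hH, Nat.sub_self, pow_zero, one_mul, mul_one]

end ConvolutionHelpers

/-- The convolution formula: for every matroid `M` on a finite ground set `E` (possibly empty),
`g_M(x,y,z,w) = ∑_{A ⊆ E} g_{M|A}(0,y,z,w) · g_{M/A}(x,0,z,w)`. -/
theorem stmt2 [Fintype α] (M : Matroid α) :
    gPoly M = ∑ A ∈ (groundFinset M).powerset,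
      subX0 (gPoly (M ↾ (A : Set α))) * subY0 (gPoly (mcontract M (A : Set α))) := by
  classical
  have h1 : ∀ A ∈ (groundFinset M).powerset, subX0 (gPoly (M ↾ (A : Set α)))
      = ∑ B ∈ A.powerset, (-(X 2 : MvPolynomial (Fin 4) ℤ)) ^ (matRank M A - matRank M B)
          * (X 1 + X 2) ^ matRank M B * (X 1 - X 3) ^ (B.card - matRank M B)
          * (X 3) ^ ((A.card - B.card) - (matRank M A - matRank M B)) := by
    intro A hA
    rw [gPoly, groundFinset_restrict, map_sum]
    refine Finset.sum_congr rfl fun B hB => ?_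
    have hBA := Finset.mem_powerset.1 hB
    rw [matRank_restrict (Finset.coe_subset.2 hBA),
      matRank_restrict (le_refl (↑A : Set α))]
    simp only [subX0, map_mul, map_pow, map_sub, map_add, aeval_X]
    norm_num [show ((2:Fin 4) = 0) = False from by decide,
      show ((3:Fin 4) = 0) = False from by decide,
      show ((1:Fin 4) = 0) = False from by decide,
      show ((0:Fin 4) = 0) = True from by decide]
  have h2 : ∀ A ∈ (groundFinset M).powerset, subY0 (gPoly (mcontract M (A : Set α)))
      = ∑ C ∈ (groundFinset M \ A).powerset,
          ((X 0 : MvPolynomial (Fin 4) ℤ) - X 2) ^ ((matRank M (groundFinset M) - matRank M A) - (matRank M (A ∪ C) - matRank M A))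
            * (X 2) ^ (matRank M (A ∪ C) - matRank M A)
            * (-(X 3)) ^ (C.card - (matRank M (A ∪ C) - matRank M A))
            * (X 0 + X 3) ^ (((groundFinset M \ A).card - C.card) - ((matRank M (groundFinset M) - matRank M A) - (matRank M (A ∪ C) - matRank M A))) := by
    intro A hA
    have hAsub := Finset.mem_powerset.1 hA
    rw [gPoly, groundFinset_mcontract hAsub, map_sum]
    refine Finset.sum_congr rfl fun C hC => ?_
    have hCsub := Finset.mem_powerset.1 hC
    have hcC : matRank (mcontract M (↑A : Set α)) C = matRank M (A ∪ C) - matRank M A := by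
      have := matRank_mcontract hAsub hCsub
      have h2 := matRank_mono (M := M) (Finset.subset_union_left (s₁ := A) (s₂ := C))
      omega
    have hcG : matRank (mcontract M (↑A : Set α)) (groundFinset M \ A) = matRank M (groundFinset M) - matRank M A := by
      have h0 := matRank_mcontract hAsub (le_refl (groundFinset M \ A))
      rw [Finset.union_sdiff_of_subset hAsub] at h0
      have h2 := matRank_mono (M := M) hAsub
      omega
    rw [hcC, hcG]
    simp only [subY0, map_mul, map_pow, map_sub, map_add, aeval_X]
    norm_num [show ((2:Fin 4) = 1) = False from by decide,
      show ((3:Fin 4) = 1) = False from by decide,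
      show ((0:Fin 4) = 1) = False from by decide,
      show ((1:Fin 4) = 1) = True from by decide]
  rw [Finset.sum_congr rfl (fun A hA => by rw [h1 A hA, h2 A hA])]
  rw [gPoly]
  exact conv (X 0) (X 1) (X 2) (X 3) (groundFinset M) (matRank M)
    (fun A B h => matRank_mono h) (fun A B h => matRank_le_add h)
end

section
/- Let M be a matroid on a finite ground set E with |E| = n+1 ≥ 2, let e ∈ E be neither a loop nor a coloop of M, and let ≤ be a linear order on E∖{e} with elements listed as a₀ < a₁ < ⋯ < a_{n−1}. For 0 ≤ i ≤ n let ≤ᵢ be the linear order on E given by a₀ < ⋯ < a_{i−1} < e < a_i < ⋯ < a_{n−1}. Then there exists k with 0 ≤ k ≤ n−1 such that: (i) B_{≤ᵢ}(M) = B_≤(M/e) ∪ {e} for all 0 ≤ i ≤ k; (ii) B_{≤ᵢ}(M) = B_≤(M∖e) for all k+1 ≤ i ≤ n; and (iii) B_≤(M∖e) = B_≤(M/e) ∪ {a_k}. -/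
open Matroid

variable {α : Type*}

/-- `B₀` is the lex-first basis of the matroid `M` with respect to the order relation `le`:
it is a basis, and for every other basis `B'`, the `le`-least element of the symmetric
difference `B₀ ∆ B'` belongs to `B₀`. -/
def IsLexFirstBasis (M : Matroid α) (le : α → α → Prop) (B₀ : Set α) : Prop :=
  M.IsBase B₀ ∧ ∀ B', M.IsBase B' → B' ≠ B₀ →
    ∀ m ∈ symmDiff B₀ B', (∀ x ∈ symmDiff B₀ B', le m x) → m ∈ B₀

/-!
Bases of `M` avoiding `e` are the bases of `M ＼ {e}`, and bases containing `e` are the bases of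
`M ／ {e}` with `e` added. Hence a lex-first basis of `M`, for any order inducing `≤` on `E ∖ {e}`,
is `Bd` or `Bc ∪ {e}`. Exchange arguments against the lex-firstness of `Bd` and `Bc` show that
`Bd = Bc ∪ {m}`, where `m` is the least element of `Bd ∆ Bc`. So the two candidates differ exactly
in `e` and `m`, and the lex-first basis for `≤ᵢ` is the one containing the smaller of the two.
-/

open Set

lemma Set.Finite.exists_forall_rel {r : α → α → Prop} [IsLinearOrder α r] {S : Set α}
    (hS : S.Finite) (hne : S.Nonempty) : ∃ m ∈ S, ∀ x ∈ S, r m x := by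
  let _ : LinearOrder α :=
    { le := r, le_refl := refl_of r, le_trans := fun _ _ _ => trans_of r,
      le_antisymm := fun _ _ => antisymm_of r, le_total := total_of r,
      toDecidableLE := Classical.decRel _ }
  obtain ⟨m, hm, hmin⟩ := hS.exists_minimal hne
  exact ⟨m, hm, fun x hx => (total_of r m x).elim id (hmin hx)⟩

namespace Matroid

variable {M : Matroid α} {B B₁ B₂ : Set α} {e x : α}

lemma IsBase.rev_exchange (hB₁ : M.IsBase B₁) (hB₂ : M.IsBase B₂) (hx : x ∈ B₁ \ B₂) :
    ∃ y ∈ B₂ \ B₁, M.IsBase (insert x (B₂ \ {y})) := by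
  have hxE := hB₁.subset_ground hx.1
  obtain ⟨y, ⟨⟨hyE, hyB₁⟩, hyB₂⟩, hbase⟩ := hB₂.compl_isBase_dual.exchange
    hB₁.compl_isBase_dual (e := x) ⟨⟨hxE, hx.2⟩, fun h => h.2 hx.1⟩
  have hyB₂ : y ∈ B₂ := by_contra fun h => hyB₂ ⟨hyE, h⟩
  refine ⟨y, ⟨hyB₂, hyB₁⟩, ?_⟩
  convert hbase.compl_isBase_of_dual using 1
  have := hB₂.subset_ground
  ext z
  simp only [mem_insert_iff, mem_sdiff, mem_singleton_iff]
  grind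

lemma Coindep.deleteElem_isBase_iff (he : M.Coindep {e}) :
    (M ＼ {e}).IsBase B ↔ M.IsBase B ∧ e ∉ B := by
  rw [he.delete_isBase_iff, disjoint_singleton_right]

lemma Indep.contractElem_isBase_iff (he : M.Indep {e}) :
    (M ／ {e}).IsBase B ↔ M.IsBase (B ∪ {e}) ∧ e ∉ B := by
  rw [he.contract_isBase_iff, disjoint_singleton_right]

end Matroid

namespace IsLexFirstBasis

variable {M N : Matroid α} {r s : α → α → Prop} {B B' C X T : Set α} {m x y : α}

lemma mem_of_forall_rel (hB : IsLexFirstBasis N r B) (hB' : N.IsBase B')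
    (hm : m ∈ symmDiff B B') (hmin : ∀ x ∈ symmDiff B B', r m x) : m ∈ B :=
  hB.2 B' hB' (by rintro rfl; simp at hm) m hm hmin

lemma mem_of_mem_of_symmDiff_subset (hB : IsLexFirstBasis N r B) (hB' : N.IsBase B')
    (hmB' : m ∈ B') (hBB' : symmDiff B B' ⊆ T) (hmin : ∀ x ∈ T, r m x) : m ∈ B :=
  by_contra fun hmB => hmB (hB.mem_of_forall_rel hB' (Or.inr ⟨hmB', hmB⟩)
    fun x hx => hmin x (hBB' hx))

lemma unique [IsLinearOrder α r] [N.RankFinite] (hB : IsLexFirstBasis N r B)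
    (hB' : IsLexFirstBasis N r B') : B = B' := by
  by_contra hne
  obtain ⟨m, hm, hmin⟩ := ((hB.1.finite.union hB'.1.finite).subset symmDiff_subset_union
    |>.exists_forall_rel (r := r)) (nonempty_iff_ne_empty.2 (symmDiff_eq_bot.not.2 hne))
  have hmB := hB.mem_of_forall_rel hB'.1 hm hmin
  have hmB' := hB'.mem_of_forall_rel hB.1 (symmDiff_comm B B' ▸ hm) (symmDiff_comm B B' ▸ hmin)
  rcases hm with h | h
  exacts [h.2 hmB', h.2 hmB]

lemma eq_insert_of_rel [Std.Refl r] (hB : IsLexFirstBasis N r B) (hxC : N.IsBase (insert x C))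
    (hBxy : B = insert x C ∨ B = insert y C) (hx : x ∉ C) (hxy : x ≠ y) (hr : r x y) :
    B = insert x C := by
  rcases hBxy with rfl | rfl
  · rfl
  · have hxy' : x ∉ insert y C := by simp [hxy, hx]
    refine absurd (hB.mem_of_forall_rel hxC (Or.inr ⟨mem_insert x C, hxy'⟩) fun z hz => ?_) hxy'
    obtain rfl | rfl : z = x ∨ z = y := by
      simp only [mem_symmDiff, mem_insert_iff] at hz
      tauto
    exacts [refl_of r z, hr]

lemma of_union (hB : IsLexFirstBasis M r (B ∪ X)) (hN : N.IsBase B)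
    (hbase : ∀ B', N.IsBase B' → M.IsBase (B' ∪ X)) (hX : Disjoint N.E X)
    (hsr : ∀ x ∈ N.E, ∀ y ∈ N.E, s x y → r x y) : IsLexFirstBasis N s B := by
  refine ⟨hN, fun B' hB' _ m hm hmin => ?_⟩
  have hsub : symmDiff B B' ⊆ N.E :=
    symmDiff_subset_union.trans (union_subset hN.subset_ground hB'.subset_ground)
  have hsymm : symmDiff (B ∪ X) (B' ∪ X) = symmDiff B B' := by
    ext x
    have hBX : x ∈ B → x ∉ X := fun h => hX.notMem_of_mem_left (hN.subset_ground h)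
    have hB'X : x ∈ B' → x ∉ X := fun h => hX.notMem_of_mem_left (hB'.subset_ground h)
    simp only [mem_symmDiff, mem_union]
    tauto
  have hmB := hB.mem_of_forall_rel (hbase B' hB') (hsymm ▸ hm)
    fun x hx => hsr m (hsub hm) x (hsub (hsymm ▸ hx)) (hmin x (hsymm ▸ hx))
  exact hmB.resolve_right (hX.notMem_of_mem_left (hsub hm))

end IsLexFirstBasis

section DeleteContract

variable {M : Matroid α} {r s : α → α → Prop} {e m : α} {B Bd Bc : Set α}

lemma IsLexFirstBasis.mem_delete_of_forall_rel (hind : M.Indep {e}) (hcoind : M.Coindep {e})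
    (hBd : IsLexFirstBasis (M ＼ {e}) r Bd) (hBc : IsLexFirstBasis (M ／ {e}) r Bc)
    (hm : m ∈ symmDiff Bd Bc) (hmin : ∀ x ∈ symmDiff Bd Bc, r m x) : m ∈ Bd := by
  obtain ⟨hBdM, heBd⟩ := hcoind.deleteElem_isBase_iff.1 hBd.1
  obtain ⟨hBcM, heBc⟩ := hind.contractElem_isBase_iff.1 hBc.1
  by_contra hmBd
  have hmBc : m ∈ Bc := (hm.resolve_left fun h => hmBd h.1).1
  obtain ⟨y, ⟨hyBd, hyBc⟩, hbase⟩ := hBcM.rev_exchange hBdM ⟨Or.inl hmBc, hmBd⟩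
  refine hmBd (hBd.mem_of_mem_of_symmDiff_subset (B' := insert m (Bd \ {y})) ?_
    (mem_insert m _) ?_ hmin)
  · refine hcoind.deleteElem_isBase_iff.2 ⟨hbase, ?_⟩
    rintro (rfl | h)
    exacts [heBc hmBc, heBd h.1]
  · intro x hx
    simp only [mem_symmDiff, mem_insert_iff, mem_sdiff, mem_singleton_iff, mem_union] at hx hyBc ⊢
    grind

lemma IsLexFirstBasis.isBase_insert_of_forall_rel (hind : M.Indep {e}) (hcoind : M.Coindep {e})
    (hBd : IsLexFirstBasis (M ＼ {e}) r Bd) (hBc : IsLexFirstBasis (M ／ {e}) r Bc)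
    (hm : m ∈ symmDiff Bd Bc) (hmin : ∀ x ∈ symmDiff Bd Bc, r m x) : M.IsBase (insert m Bc) := by
  obtain ⟨hBdM, heBd⟩ := hcoind.deleteElem_isBase_iff.1 hBd.1
  obtain ⟨hBcM, heBc⟩ := hind.contractElem_isBase_iff.1 hBc.1
  have hmBd := hBd.mem_delete_of_forall_rel hind hcoind hBc hm hmin
  have hmBc : m ∉ Bc := fun h => (hm.resolve_left fun h' => h'.2 h).2 hmBd
  have hme : m ≠ e := by rintro rfl; exact heBd hmBd
  obtain ⟨y, ⟨hyBc | rfl, hyBd⟩, hbase⟩ :=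
    hBdM.rev_exchange hBcM ⟨hmBd, by simp [hmBc, hme]⟩
  · refine absurd (hBc.mem_of_mem_of_symmDiff_subset (B' := insert m (Bc \ {y})) ?_
      (mem_insert m _) ?_ hmin) hmBc
    · refine hind.contractElem_isBase_iff.2 ⟨?_, ?_⟩
      · convert hbase using 1
        ext x
        simp only [mem_insert_iff, mem_sdiff, mem_singleton_iff, mem_union]
        grind
      · simp [hme.symm, heBc]
    · intro x hx
      simp only [mem_symmDiff, mem_insert_iff, mem_sdiff, mem_singleton_iff] at hx ⊢
      grind
  · simpa [heBc] using hbase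

lemma IsLexFirstBasis.isBase_insert_sdiff_of_forall_rel (hind : M.Indep {e})
    (hcoind : M.Coindep {e}) (hBd : IsLexFirstBasis (M ＼ {e}) r Bd)
    (hBc : IsLexFirstBasis (M ／ {e}) r Bc) (hm : m ∈ symmDiff Bd Bc)
    (hmin : ∀ x ∈ symmDiff Bd Bc, r m x) : M.IsBase (insert e (Bd \ {m})) := by
  obtain ⟨hBdM, heBd⟩ := hcoind.deleteElem_isBase_iff.1 hBd.1
  obtain ⟨hBcM, heBc⟩ := hind.contractElem_isBase_iff.1 hBc.1
  have hmBd := hBd.mem_delete_of_forall_rel hind hcoind hBc hm hmin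
  have hmBc : m ∉ Bc := fun h => (hm.resolve_left fun h' => h'.2 h).2 hmBd
  obtain ⟨y, ⟨hyBd, hyBc⟩, hbase⟩ := hBcM.rev_exchange hBdM ⟨Or.inr rfl, heBd⟩
  obtain rfl | hym := eq_or_ne y m
  · exact hbase
  refine absurd (hBc.mem_of_mem_of_symmDiff_subset (B' := Bd \ {y}) ?_ ⟨hmBd, hym.symm⟩ ?_ hmin)
    hmBc
  · refine hind.contractElem_isBase_iff.2 ⟨by rwa [union_singleton], fun h => heBd h.1⟩
  · intro x hx
    simp only [mem_symmDiff, mem_sdiff, mem_singleton_iff, mem_union] at hx hyBc ⊢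
    grind

theorem IsLexFirstBasis.exists_delete_eq_insert_contract [IsLinearOrder α r] [M.RankFinite]
    (hind : M.Indep {e}) (hcoind : M.Coindep {e}) (hBd : IsLexFirstBasis (M ＼ {e}) r Bd)
    (hBc : IsLexFirstBasis (M ／ {e}) r Bc) : ∃ m ∉ Bc, Bd = insert m Bc := by
  obtain ⟨hBdM, heBd⟩ := hcoind.deleteElem_isBase_iff.1 hBd.1
  obtain ⟨hBcM, heBc⟩ := hind.contractElem_isBase_iff.1 hBc.1
  have hne : Bd ≠ Bc := by
    rintro rfl
    exact hBdM.insert_not_isBase heBd (union_singleton ▸ hBcM)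
  obtain ⟨m, hm, hmin⟩ := ((hBd.1.finite.union hBc.1.finite).subset symmDiff_subset_union
    |>.exists_forall_rel (r := r)) (nonempty_iff_ne_empty.2 (symmDiff_eq_bot.not.2 hne))
  have hmBd := hBd.mem_delete_of_forall_rel hind hcoind hBc hm hmin
  have hmBc : m ∉ Bc := fun h => (hm.resolve_left fun h' => h'.2 h).2 hmBd
  have hme : m ≠ e := by rintro rfl; exact heBd hmBd
  refine ⟨m, hmBc, ?_⟩
  by_contra hne'
  -- `Bd, insert m Bc` in `M ＼ {e}` and `Bc, Bd \ {m}` in `M ／ {e}` have the same symmetric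
  -- difference, so its least element lies in both `Bd` and `Bc`.
  have hsymm : symmDiff Bc (Bd \ {m}) = symmDiff Bd (insert m Bc) := by
    ext x
    simp only [mem_symmDiff, mem_insert_iff, mem_sdiff, mem_singleton_iff]
    grind
  obtain ⟨x, hx, hxmin⟩ := ((hBd.1.finite.union (hBc.1.finite.insert m)).subset
    symmDiff_subset_union |>.exists_forall_rel (r := r))
    (nonempty_iff_ne_empty.2 (symmDiff_eq_bot.not.2 hne'))
  have hxBd := hBd.mem_of_forall_rel (hcoind.deleteElem_isBase_iff.2
    ⟨hBd.isBase_insert_of_forall_rel hind hcoind hBc hm hmin, by simp [hme.symm, heBc]⟩) hx hxmin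
  have hxBc := hBc.mem_of_forall_rel (hind.contractElem_isBase_iff.2
    ⟨union_singleton (a := e) ▸ hBd.isBase_insert_sdiff_of_forall_rel hind hcoind hBc hm hmin,
      fun h => heBd h.1⟩) (hsymm ▸ hx) (hsymm ▸ hxmin)
  rcases hx with h | h
  exacts [h.2 (mem_insert_of_mem m hxBc), h.2 hxBd]

theorem IsLexFirstBasis.eq_union_or_eq [IsLinearOrder α s] [M.RankFinite] (hind : M.Indep {e})
    (hcoind : M.Coindep {e}) (hB : IsLexFirstBasis M r B) (hBd : IsLexFirstBasis (M ＼ {e}) s Bd)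
    (hBc : IsLexFirstBasis (M ／ {e}) s Bc)
    (hsr : ∀ x ∈ M.E \ {e}, ∀ y ∈ M.E \ {e}, s x y → r x y) :
    B = Bc ∪ {e} ∨ B = Bd := by
  by_cases heB : e ∈ B
  · have hBe : B \ {e} ∪ {e} = B := sdiff_union_of_subset (singleton_subset_iff.2 heB)
    have hlex : IsLexFirstBasis (M ／ {e}) s (B \ {e}) := IsLexFirstBasis.of_union (by rwa [hBe])
      (hind.contractElem_isBase_iff.2 ⟨by rw [hBe]; exact hB.1, fun h => h.2 rfl⟩)
      (fun B' hB' => (hind.contractElem_isBase_iff.1 hB').1) disjoint_sdiff_left hsr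
    exact Or.inl (by rw [← hBe, hlex.unique hBc])
  · refine Or.inr (IsLexFirstBasis.unique (IsLexFirstBasis.of_union ((union_empty B).symm ▸ hB)
      (hcoind.deleteElem_isBase_iff.2 ⟨hB.1, heB⟩) (fun B' hB' => ?_) (disjoint_empty _) hsr) hBd)
    exact (union_empty B').symm ▸ (hcoind.deleteElem_isBase_iff.1 hB').1

end DeleteContract

theorem stmt11_general [Fintype α] (M : Matroid α) (n : ℕ) (e : α)
    (heloop : ¬ ∀ B, M.IsBase B → e ∉ B) (hecoloop : ¬ ∀ B, M.IsBase B → e ∈ B)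
    (a : Fin n → α) (hrange : Set.range a = M.E \ {e})
    (le : α → α → Prop) (hlin : IsLinearOrder α le)
    (hle : ∀ j j' : Fin n, le (a j) (a j') ↔ j ≤ j')
    (L : Fin (n + 1) → α → α → Prop)
    (hLlin : ∀ i, IsLinearOrder α (L i))
    (hL1 : ∀ (i : Fin (n + 1)) (j j' : Fin n), L i (a j) (a j') ↔ j ≤ j')
    (hL2 : ∀ (i : Fin (n + 1)) (j : Fin n), L i e (a j) ↔ (i : ℕ) ≤ (j : ℕ))
    (hL3 : ∀ (i : Fin (n + 1)) (j : Fin n), L i (a j) e ↔ (j : ℕ) < (i : ℕ))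
    (B : Fin (n + 1) → Set α) (hB : ∀ i, IsLexFirstBasis M (L i) (B i))
    (Bd Bc : Set α)
    (hBd : IsLexFirstBasis (mdelete M {e}) le Bd)
    (hBc : IsLexFirstBasis (mcontract M {e}) le Bc) :
    ∃ k : Fin n,
      (∀ i : Fin (n + 1), (i : ℕ) ≤ (k : ℕ) → B i = Bc ∪ {e}) ∧
      (∀ i : Fin (n + 1), (k : ℕ) < (i : ℕ) → B i = Bd) ∧
      Bd = Bc ∪ {a k} := by
  obtain ⟨B₁, hB₁, heB₁⟩ : ∃ B, M.IsBase B ∧ e ∈ B := by simpa using heloop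
  obtain ⟨B₀, hB₀, heB₀⟩ : ∃ B, M.IsBase B ∧ e ∉ B := by simpa using hecoloop
  have hind : M.Indep {e} := hB₁.indep.subset (singleton_subset_iff.2 heB₁)
  have hcoind : M.Coindep {e} := coindep_iff_subset_compl_isBase.2
    ⟨B₀, hB₀, singleton_subset_iff.2 ⟨hB₁.subset_ground heB₁, heB₀⟩⟩
  have := hlin
  obtain ⟨m, hmBc, rfl⟩ := hBd.exists_delete_eq_insert_contract hind hcoind hBc
  obtain ⟨k, rfl⟩ : m ∈ range a := hrange ▸ hBd.1.subset_ground (mem_insert m Bc)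
  have hke : a k ≠ e := (hrange ▸ mem_range_self k : a k ∈ M.E \ {e}).2
  have hdich : ∀ i, B i = insert e Bc ∨ B i = insert (a k) Bc := fun i =>
    union_singleton (a := e) ▸ (hB i).eq_union_or_eq hind hcoind hBd hBc (by
      rw [← hrange]
      rintro _ ⟨j, rfl⟩ _ ⟨j', rfl⟩ h
      exact (hL1 i j j').2 ((hle j j').1 h))
  obtain ⟨hBcM, heBc⟩ := hind.contractElem_isBase_iff.1 hBc.1
  refine ⟨k, fun i hik => ?_, fun i hki => ?_, (union_singleton ..).symm⟩
  · have := hLlin i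
    rw [union_singleton] at hBcM ⊢
    exact (hB i).eq_insert_of_rel hBcM (hdich i) heBc hke.symm ((hL2 i k).2 hik)
  · have := hLlin i
    exact (hB i).eq_insert_of_rel (hcoind.deleteElem_isBase_iff.1 hBd.1).1 (hdich i).symm hmBc hke
      ((hL3 i k).2 hki)

/-- Let `|E| = n+1 ≥ 2` and let `e ∈ E` be neither a loop nor a coloop.  Let `le` be a linear
order listing `E ∖ {e}` as `a 0 < a 1 < ⋯ < a (n-1)`, and for `0 ≤ i ≤ n` let `L i` be the
linear order on `E` inserting `e` in position `i` (so `a 0 < ⋯ < a (i-1) < e < a i < ⋯`).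
Then there is a `k` with `0 ≤ k ≤ n-1` such that the lex-first basis of `M` w.r.t. `L i`
equals `B(M/e) ∪ {e}` for `i ≤ k` and equals `B(M∖e)` for `i > k`, and moreover
`B(M∖e) = B(M/e) ∪ {a k}`. -/
theorem stmt11 [Fintype α] (M : Matroid α) (n : ℕ) (hn : 1 ≤ n)
    (hcard : M.E.ncard = n + 1) (e : α) (he : e ∈ M.E)
    (heloop : ¬ ∀ B, M.IsBase B → e ∉ B) (hecoloop : ¬ ∀ B, M.IsBase B → e ∈ B)
    (a : Fin n → α) (hinj : Function.Injective a) (hrange : Set.range a = M.E \ {e})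
    (le : α → α → Prop) (hlin : IsLinearOrder α le)
    (hle : ∀ j j' : Fin n, le (a j) (a j') ↔ j ≤ j')
    (L : Fin (n + 1) → α → α → Prop)
    (hLlin : ∀ i, IsLinearOrder α (L i))
    (hL1 : ∀ (i : Fin (n + 1)) (j j' : Fin n), L i (a j) (a j') ↔ j ≤ j')
    (hL2 : ∀ (i : Fin (n + 1)) (j : Fin n), L i e (a j) ↔ (i : ℕ) ≤ (j : ℕ))
    (hL3 : ∀ (i : Fin (n + 1)) (j : Fin n), L i (a j) e ↔ (j : ℕ) < (i : ℕ))
    (B : Fin (n + 1) → Set α) (hB : ∀ i, IsLexFirstBasis M (L i) (B i))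
    (Bd Bc : Set α)
    (hBd : IsLexFirstBasis (mdelete M {e}) le Bd)
    (hBc : IsLexFirstBasis (mcontract M {e}) le Bc) :
    ∃ k : Fin n,
      (∀ i : Fin (n + 1), (i : ℕ) ≤ (k : ℕ) → B i = Bc ∪ {e}) ∧
      (∀ i : Fin (n + 1), (k : ℕ) < (i : ℕ) → B i = Bd) ∧
      Bd = Bc ∪ {a k} :=
  stmt11_general M n e heloop hecoloop a hrange le hlin hle L hLlin hL1 hL2 hL3 B hB Bd Bc hBd hBc
end
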